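/- arXiv:2601.00520 — 2 statements merged into one kernel-verified Lean document; each statement's English description precedes it below -/
import Mathlib

section
/- Let 𝒜, ℬ be self-adjoint extensions of A, 𝒩(u,v) = (−ℬv, 𝒜u) on dom(𝒜)×dom(ℬ), and V(u,v) = (−Gv, Fu) with F, G bounded self-adjoint operators on H. If λ ∈ ℝ is an algebraically simple eigenvalue in the discrete spectrum of 𝒩 + V with eigenvector u, then ker((𝒩+V)* − λ) = span{τu} and ⟨τu, u⟩_{H²} ≠ 0. -/
noncomputable section

open Function Set

namespace CSO

local notation "⟪" x ", " y "⟫" => (inner ℂ x y : ℂ)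

/-- The ℓ²-direct sum `E ⊕ E`. -/
abbrev Sq (E : Type*) : Type _ := WithLp 2 (E × E)

section Pieces

variable {E F E' F' : Type*}
  [NormedAddCommGroup E] [InnerProductSpace ℂ E]
  [NormedAddCommGroup F] [InnerProductSpace ℂ F]
  [NormedAddCommGroup E'] [InnerProductSpace ℂ E']
  [NormedAddCommGroup F'] [InnerProductSpace ℂ F']

/-- Pairing map into the ℓ²-direct sum. -/
def mk2 (x y : E) : Sq E := (WithLp.equiv 2 (E × E)).symm (x, y)

/-- First component. -/
def c1 (u : Sq E) : E := (WithLp.equiv 2 (E × E) u).1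

/-- Second component. -/
def c2 (u : Sq E) : E := (WithLp.equiv 2 (E × E) u).2

/-- Transport of a product of continuous linear maps to the ℓ²-products. -/
def pm (A : E →L[ℂ] E') (B : F →L[ℂ] F') :
    WithLp 2 (E × F) →L[ℂ] WithLp 2 (E' × F') :=
  (((WithLp.prodContinuousLinearEquiv 2 ℂ E' F').symm :
      (E' × F') →L[ℂ] WithLp 2 (E' × F')).comp (A.prodMap B)).comp
    ((WithLp.prodContinuousLinearEquiv 2 ℂ E F :
      WithLp 2 (E × F) ≃L[ℂ] (E × F)) : WithLp 2 (E × F) →L[ℂ] E × F)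

/-- The continuous linear map `x ↦ (A x, B x)` into an ℓ²-direct sum. -/
def mk2L (A B : E →L[ℂ] F) : E →L[ℂ] Sq F :=
  (((WithLp.prodContinuousLinearEquiv 2 ℂ F F).symm :
      (F × F) →L[ℂ] Sq F)).comp (A.prod B)

/-- First component as a continuous linear map. -/
def c1L : Sq E →L[ℂ] E :=
  (ContinuousLinearMap.fst ℂ E E).comp
    ((WithLp.prodContinuousLinearEquiv 2 ℂ E E :
      Sq E ≃L[ℂ] (E × E)) : Sq E →L[ℂ] E × E)

/-- Second component as a continuous linear map. -/
def c2L : Sq E →L[ℂ] E :=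
  (ContinuousLinearMap.snd ℂ E E).comp
    ((WithLp.prodContinuousLinearEquiv 2 ℂ E E :
      Sq E ≃L[ℂ] (E × E)) : Sq E →L[ℂ] E × E)

/-- The involution `τ (u₁, u₂) = (u₂, u₁)`. -/
def swapL (E : Type*) [NormedAddCommGroup E] [InnerProductSpace ℂ E] :
    Sq E →L[ℂ] Sq E := mk2L c2L c1L

/-- The standard symplectic matrix `J (f₁, f₂) = (f₂, -f₁)`. -/
def Jm (E : Type*) [NormedAddCommGroup E] [InnerProductSpace ℂ E] :
    Sq E →L[ℂ] Sq E := mk2L c2L (-c1L)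

/-- The symplectic matrix `𝒥 = J ⊕ (-J)` on `𝔥⁴`. -/
def calJ (E : Type*) [NormedAddCommGroup E] [InnerProductSpace ℂ E] :
    Sq (Sq E) →L[ℂ] Sq (Sq E) := pm (Jm E) (-(Jm E))

/-- The symplectic form `ω(f, g) = ⟨f₂, g₁⟩ - ⟨f₁, g₂⟩` on `𝔥²`. -/
def om (f g : Sq E) : ℂ := ⟪c2 f, c1 g⟫ - ⟪c1 f, c2 g⟫

/-- The symplectic form
`Ω(f, g) = ⟨f₂,g₁⟩ - ⟨f₁,g₂⟩ - ⟨f₄,g₃⟩ + ⟨f₃,g₄⟩` on `𝔥⁴`. -/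
def Om (f g : Sq (Sq E)) : ℂ := om (c1 f) (c1 g) - om (c2 f) (c2 g)

/-- Orthogonal projection predicate. -/
def IsOrthProj [CompleteSpace E] (P : E →L[ℂ] E) : Prop :=
  P.comp P = P ∧ IsSelfAdjoint P

/-- The range of `P` is a Lagrangian subspace of `(𝔥², ω)`. -/
def IsLagrangianRange (P : Sq E →L[ℂ] Sq E) : Prop :=
  ∀ f, f ∈ Set.range P ↔ ∀ g ∈ Set.range P, om f g = 0

end Pieces

/-- The core data: a closed densely defined symmetric operator `A` with equal finite
deficiency indices `dim 𝔥`, whose adjoint `A*` has domain the Hilbert space `Hp = H₊`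
(with the graph inner product), realized through the embedding `e : H₊ → H` and the
bounded operator `As = A* : H₊ → H`. -/
structure Core (H 𝔥 Hp : Type*) [NormedAddCommGroup H] [InnerProductSpace ℂ H]
    [NormedAddCommGroup 𝔥] [InnerProductSpace ℂ 𝔥]
    [NormedAddCommGroup Hp] [InnerProductSpace ℂ Hp] where
  e : Hp →L[ℂ] H
  As : Hp →L[ℂ] H
  e_inj : Function.Injective e
  graph_inner : ∀ u v : Hp, ⟪u, v⟫ = ⟪e u, e v⟫ + ⟪As u, As v⟫
  domA : Submodule ℂ Hp
  dense_dom : Dense (e '' (domA : Set Hp))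
  adjoint_iff : ∀ v w : H,
      (∃ p : Hp, e p = v ∧ As p = w) ↔ ∀ u ∈ domA, ⟪As u, v⟫ = ⟪e u, w⟫
  closed_graph : IsClosed {q : H × H | ∃ p ∈ domA, e p = q.1 ∧ As p = q.2}
  defect_m : Module.finrank ℂ
      (LinearMap.ker (As.toLinearMap - Complex.I • e.toLinearMap)) = Module.finrank ℂ 𝔥
  defect_p : Module.finrank ℂ
      (LinearMap.ker (As.toLinearMap + Complex.I • e.toLinearMap)) = Module.finrank ℂ 𝔥

variable {H 𝔥 Hp : Type*}
  [NormedAddCommGroup H] [InnerProductSpace ℂ H]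
  [NormedAddCommGroup 𝔥] [InnerProductSpace ℂ 𝔥]
  [NormedAddCommGroup Hp] [InnerProductSpace ℂ Hp]

/-- The embedding `H₊² → H²`. -/
def Core.emb2 (C : Core H 𝔥 Hp) : Sq Hp →L[ℂ] Sq H := pm C.e C.e

/-- The action `(u₁,u₂) ↦ (-A* u₂, A* u₁)` (the common formula for `N` and its
extensions `𝒩`). -/
def Core.Nmax (C : Core H 𝔥 Hp) : Sq Hp →L[ℂ] Sq H :=
  mk2L ((-C.As).comp c2L) (C.As.comp c1L)

/-- The action of `N* : (u₁,u₂) ↦ (A* u₂, -A* u₁)`. -/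
def Core.NstarOp (C : Core H 𝔥 Hp) : Sq Hp →L[ℂ] Sq H := -C.Nmax

/-- The action of `(τN)* : (u₁,u₂) ↦ (A* u₁, -A* u₂)`. -/
def Core.tauNstarOp (C : Core H 𝔥 Hp) : Sq Hp →L[ℂ] Sq H :=
  mk2L (C.As.comp c1L) ((-C.As).comp c2L)

/-- Trace operator (boundary triplet map) for `A*`: bounded, surjective, and
satisfying the abstract Green identity. -/
structure IsTrace (C : Core H 𝔥 Hp) (tr : Hp →L[ℂ] Sq 𝔥) : Prop where
  surj : Function.Surjective tr
  green : ∀ u v : Hp, ⟪C.As u, C.e v⟫ - ⟪C.e u, C.As v⟫ = om (tr u) (tr v)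

/-- The doubled trace operator `T = tr ⊕ tr : H₊² → 𝔥⁴`. -/
def Top (tr : Hp →L[ℂ] Sq 𝔥) : Sq Hp →L[ℂ] Sq (Sq 𝔥) := pm tr tr

/-- `dom ⊆ H₊` is the domain of a self-adjoint extension of `A` (the extension being
the restriction of `A*` to `dom`). -/
structure IsSAExt (C : Core H 𝔥 Hp) (dom : Submodule ℂ Hp) : Prop where
  le : C.domA ≤ dom
  sa : ∀ v w : H,
      (∃ p ∈ dom, C.e p = v ∧ C.As p = w) ↔ ∀ u ∈ dom, ⟪C.As u, v⟫ = ⟪C.e u, w⟫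

/-- The bounded potential `V(u,v) = (-G v, F u)` on `H²`. -/
def Vop [CompleteSpace H] (F G : H →L[ℂ] H) : Sq H →L[ℂ] Sq H :=
  mk2L ((-G).comp c2L) (F.comp c1L)

/-- The adjoint potential `V*(u,v) = (F v, -G u)` on `H²`. -/
def VopStar [CompleteSpace H] (F G : H →L[ℂ] H) : Sq H →L[ℂ] Sq H :=
  mk2L (F.comp c2L) ((-G).comp c1L)

/-- `p ∈ dom(𝒜) × dom(ℬ)` and `(𝒩 + V - ζ) p = x`. -/
def ResSol (C : Core H 𝔥 Hp) [CompleteSpace H] (dU dV : Submodule ℂ Hp)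
    (V : Sq H →L[ℂ] Sq H) (ζ : ℂ) (p : Sq Hp) (x : Sq H) : Prop :=
  c1 p ∈ dU ∧ c2 p ∈ dV ∧ C.Nmax p + V (C.emb2 p) - ζ • C.emb2 p = x

/-- `R = (𝒩 + V - ζ)⁻¹`, viewed as a bounded operator from `H²` to `H₊²`. -/
def IsResS (C : Core H 𝔥 Hp) [CompleteSpace H] (dU dV : Submodule ℂ Hp)
    (V : Sq H →L[ℂ] Sq H) (ζ : ℂ) (R : Sq H →L[ℂ] Sq Hp) : Prop :=
  (∀ x, ResSol C dU dV V ζ (R x) x) ∧ ∀ p x, ResSol C dU dV V ζ p x → R x = p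

/-- `R = (𝒩 + V - ζ)⁻¹ ∈ B(H²)`. -/
def IsResW (C : Core H 𝔥 Hp) [CompleteSpace H] (dU dV : Submodule ℂ Hp)
    (V : Sq H →L[ℂ] Sq H) (ζ : ℂ) (R : Sq H →L[ℂ] Sq H) : Prop :=
  (∀ x, ∃ p, ResSol C dU dV V ζ p x ∧ C.emb2 p = R x) ∧
    ∀ p x, ResSol C dU dV V ζ p x → R x = C.emb2 p

/-- The spectrum of `𝒩 + V` (complement of the resolvent set). -/
def specSet (C : Core H 𝔥 Hp) [CompleteSpace H] (dU dV : Submodule ℂ Hp)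
    (V : Sq H →L[ℂ] Sq H) : Set ℂ :=
  {ζ | ¬ ∃ R : Sq H →L[ℂ] Sq Hp, IsResS C dU dV V ζ R}

/-- The resolvent `(𝒩 + V - ζ)⁻¹ : H² → H₊²` (defined by choice; `0` off the
resolvent set). -/
def resolventS (C : Core H 𝔥 Hp) [CompleteSpace H] (dU dV : Submodule ℂ Hp)
    (V : Sq H →L[ℂ] Sq H) (ζ : ℂ) : Sq H →L[ℂ] Sq Hp :=
  open Classical in
  if h : ∃ R, IsResS C dU dV V ζ R then h.choose else 0

/-- The resolvent `(𝒩 + V - ζ)⁻¹ ∈ B(H²)`. -/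
def resolventW (C : Core H 𝔥 Hp) [CompleteSpace H] (dU dV : Submodule ℂ Hp)
    (V : Sq H →L[ℂ] Sq H) (ζ : ℂ) : Sq H →L[ℂ] Sq H :=
  C.emb2.comp (resolventS C dU dV V ζ)

/-- `ζ` is an eigenvalue of `𝒩 + V`. -/
def IsEig (C : Core H 𝔥 Hp) [CompleteSpace H] (dU dV : Submodule ℂ Hp)
    (V : Sq H →L[ℂ] Sq H) (ζ : ℂ) : Prop :=
  ∃ p : Sq Hp, p ≠ 0 ∧ c1 p ∈ dU ∧ c2 p ∈ dV ∧
    C.Nmax p + V (C.emb2 p) = ζ • C.emb2 p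

/-- The one-parameter families of Hypothesis 3.1: trace operators, orthogonal
projections with Lagrangian ranges, self-adjoint extensions compatible with the
projections, and bounded self-adjoint perturbations. -/
structure IsFamily [CompleteSpace H] [CompleteSpace Hp] [FiniteDimensional ℂ 𝔥]
    (C : Core H 𝔥 Hp)
    (tr : ℝ → Hp →L[ℂ] Sq 𝔥) (P Q : ℝ → Sq 𝔥 →L[ℂ] Sq 𝔥)
    (dU dV : ℝ → Submodule ℂ Hp) (F G : ℝ → H →L[ℂ] H) : Prop where
  htr : ∀ t ∈ Icc (0:ℝ) 1, IsTrace C (tr t)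
  hP : ∀ t ∈ Icc (0:ℝ) 1, IsOrthProj (P t) ∧ IsLagrangianRange (P t)
  hQ : ∀ t ∈ Icc (0:ℝ) 1, IsOrthProj (Q t) ∧ IsLagrangianRange (Q t)
  hU : ∀ t ∈ Icc (0:ℝ) 1, IsSAExt C (dU t)
  hV : ∀ t ∈ Icc (0:ℝ) 1, IsSAExt C (dV t)
  htrU : ∀ t ∈ Icc (0:ℝ) 1, tr t '' ((dU t : Set Hp)) = Set.range (P t)
  htrV : ∀ t ∈ Icc (0:ℝ) 1, tr t '' ((dV t : Set Hp)) = Set.range (Q t)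
  hF : ∀ t ∈ Icc (0:ℝ) 1, IsSelfAdjoint (F t)
  hG : ∀ t ∈ Icc (0:ℝ) 1, IsSelfAdjoint (G t)

/-- Hypothesis 3.3: there is a point `z` in the resolvent set of `𝒩_t + V_t`
for all `t` near `t₀`. -/
def HypZ [CompleteSpace H] (C : Core H 𝔥 Hp) (dU dV : ℝ → Submodule ℂ Hp)
    (F G : ℝ → H →L[ℂ] H) (t₀ : ℝ) (z : ℂ) : Prop :=
  ∃ δ > 0, ∀ t : ℝ, |t - t₀| < δ →
    ∃ R, IsResS C (dU t) (dV t) (Vop (F t) (G t)) z R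

end CSO

/-!
The identity `⟪(𝒩 + V - λ) p, τ q⟫ = ⟪τ p, (𝒩 + V - λ) q⟫` on `dom(𝒜) × dom(ℬ)`, together with
self-adjointness of `𝒜` and `ℬ`, shows that `τ` maps `ker(𝒩 + V - λ)` onto
`ker((𝒩 + V)* - λ)`, which is therefore spanned by `τu`. If `⟪τu, u⟫ = 0`, then `u` is orthogonal
to `ker((𝒩 + V)* - λ) = ran(𝒩 + V - λ)ᗮ`; the range being closed, `u` lies in it, so
`(𝒩 + V - λ) w = u` has a solution, contradicting algebraic simplicity.
-/

namespace CSO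

local notation "⟪" x ", " y "⟫" => (inner ℂ x y : ℂ)

section Components

variable {E : Type*}

@[simp] lemma c1_mk2 (x y : E) : c1 (mk2 x y) = x := rfl
@[simp] lemma c2_mk2 (x y : E) : c2 (mk2 x y) = y := rfl

lemma sq_ext {p q : Sq E} (h1 : c1 p = c1 q) (h2 : c2 p = c2 q) : p = q :=
  (WithLp.equiv 2 (E × E)).injective (Prod.ext h1 h2)

variable [NormedAddCommGroup E]

@[simp] lemma c1_zero : c1 (0 : Sq E) = 0 := rfl
@[simp] lemma c2_zero : c2 (0 : Sq E) = 0 := rfl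

variable [InnerProductSpace ℂ E]

lemma swapL_apply (p : Sq E) : swapL E p = mk2 (c2 p) (c1 p) := rfl

lemma inner_sq (p q : Sq E) : ⟪p, q⟫ = ⟪c1 p, c1 q⟫ + ⟪c2 p, c2 q⟫ :=
  WithLp.prod_inner_apply p q

lemma mem_of_isClosed_of_forall_inner_eq_zero [CompleteSpace E] {K : Submodule ℂ E}
    (hK : IsClosed (K : Set E)) {x : E} (hx : ∀ y ∈ Kᗮ, ⟪y, x⟫ = 0) : x ∈ K := by
  have : CompleteSpace K := hK.completeSpace_coe
  rw [← K.orthogonal_orthogonal]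
  exact (Kᗮ.mem_orthogonal x).2 hx

end Components

section Pencil

variable {H 𝔥 Hp : Type*}
  [NormedAddCommGroup H] [InnerProductSpace ℂ H]
  [NormedAddCommGroup 𝔥] [InnerProductSpace ℂ 𝔥]
  [NormedAddCommGroup Hp] [InnerProductSpace ℂ Hp]

lemma emb2_apply (C : Core H 𝔥 Hp) (p : Sq Hp) :
    C.emb2 p = mk2 (C.e (c1 p)) (C.e (c2 p)) := rfl

lemma IsSAExt.inner_As_comm {C : Core H 𝔥 Hp} {dom : Submodule ℂ Hp} (hdom : IsSAExt C dom)
    {p q : Hp} (hp : p ∈ dom) (hq : q ∈ dom) : ⟪C.As p, C.e q⟫ = ⟪C.e p, C.As q⟫ :=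
  (hdom.sa (C.e q) (C.As q)).mp ⟨q, hq, rfl, rfl⟩ p hp

variable [CompleteSpace H]

/-- The operator `𝒩 + V - ζ`, acting on `H₊²`. -/
def Core.pencil (C : Core H 𝔥 Hp) (F G : H →L[ℂ] H) (ζ : ℂ) : Sq Hp →L[ℂ] Sq H :=
  C.Nmax + (Vop F G).comp C.emb2 - ζ • C.emb2

lemma Core.pencil_apply (C : Core H 𝔥 Hp) (F G : H →L[ℂ] H) (ζ : ℂ) (p : Sq Hp) :
    C.pencil F G ζ p = C.Nmax p + Vop F G (C.emb2 p) - ζ • C.emb2 p := rfl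

lemma Core.pencil_apply_components (C : Core H 𝔥 Hp) (F G : H →L[ℂ] H) (ζ : ℂ) (p : Sq Hp) :
    C.pencil F G ζ p = mk2 (-C.As (c2 p) - G (C.e (c2 p)) - ζ • C.e (c1 p))
      (C.As (c1 p) + F (C.e (c1 p)) - ζ • C.e (c2 p)) :=
  sq_ext (by rw [sub_eq_add_neg (-C.As _)]; rfl) rfl

/-- The range of `𝒩 + V - ζ` on `dom(𝒜) × dom(ℬ)`. -/
def Core.pencilRange (C : Core H 𝔥 Hp) (dU dV : Submodule ℂ Hp) (F G : H →L[ℂ] H) (ζ : ℂ) :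
    Submodule ℂ (Sq H) :=
  (dU.comap (c1L : Sq Hp →L[ℂ] Hp).toLinearMap ⊓ dV.comap (c2L : Sq Hp →L[ℂ] Hp).toLinearMap).map
    (C.pencil F G ζ).toLinearMap

lemma Core.mem_pencilRange {C : Core H 𝔥 Hp} {dU dV : Submodule ℂ Hp} {F G : H →L[ℂ] H}
    {ζ : ℂ} {x : Sq H} :
    x ∈ C.pencilRange dU dV F G ζ ↔ ∃ p, c1 p ∈ dU ∧ c2 p ∈ dV ∧ C.pencil F G ζ p = x := by
  simp only [Core.pencilRange, Submodule.mem_map, Submodule.mem_inf, Submodule.mem_comap,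
    ContinuousLinearMap.coe_coe, and_assoc]
  rfl

lemma Core.mem_orthogonal_pencilRange {C : Core H 𝔥 Hp} {dU dV : Submodule ℂ Hp}
    {F G : H →L[ℂ] H} {ζ : ℂ} {q : Sq H} :
    q ∈ (C.pencilRange dU dV F G ζ)ᗮ ↔
      ∀ p, c1 p ∈ dU → c2 p ∈ dV → ⟪C.pencil F G ζ p, q⟫ = 0 := by
  simp only [Submodule.mem_orthogonal, Core.mem_pencilRange]
  constructor
  · exact fun h p hp1 hp2 => h _ ⟨p, hp1, hp2, rfl⟩
  · rintro h _ ⟨p, hp1, hp2, rfl⟩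
    exact h p hp1 hp2

section SelfAdjoint

variable {C : Core H 𝔥 Hp} {dU dV : Submodule ℂ Hp} (hU : IsSAExt C dU) (hV : IsSAExt C dV)
  {F G : H →L[ℂ] H} (hF : IsSelfAdjoint F) (hG : IsSelfAdjoint G)
include hU hV hF hG

/-- `(𝒩 + V - ζ)* = τ (𝒩 + V - ζ̄) τ` on `dom(𝒜) × dom(ℬ)`. -/
theorem inner_pencil_swapL (ζ : ℂ) {p q : Sq Hp} (hp1 : c1 p ∈ dU) (hp2 : c2 p ∈ dV)
    (hq1 : c1 q ∈ dU) (hq2 : c2 q ∈ dV) :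
    ⟪C.pencil F G ζ p, swapL H (C.emb2 q)⟫ =
      ⟪swapL H (C.emb2 p), C.pencil F G (starRingEnd ℂ ζ) q⟫ := by
  have hA1 := hU.inner_As_comm hp1 hq1
  have hA2 := hV.inner_As_comm hp2 hq2
  have hF' := hF.isSymmetric (C.e (c1 p)) (C.e (c1 q))
  have hG' := hG.isSymmetric (C.e (c2 p)) (C.e (c2 q))
  simp only [ContinuousLinearMap.coe_coe] at hF' hG'
  simp only [Core.pencil_apply_components, swapL_apply, emb2_apply, inner_sq, c1_mk2, c2_mk2,
    inner_sub_left, inner_sub_right, inner_add_left, inner_add_right, inner_neg_left,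
    inner_neg_right, inner_smul_left, inner_smul_right]
  linear_combination hA1 - hA2 + hF' - hG'

/-- Testing orthogonality against `(p₁, 0)` and `(0, p₂)` puts the components of `q` into
`dom(𝒜)` and `dom(ℬ)`, by self-adjointness of `𝒜` and `ℬ`. -/
theorem exists_eigenvector_swapL_eq_of_orthogonal {ζ : ℂ} {q : Sq H}
    (hq : ∀ p, c1 p ∈ dU → c2 p ∈ dV → ⟪C.pencil F G ζ p, q⟫ = 0) :
    ∃ p, c1 p ∈ dU ∧ c2 p ∈ dV ∧ C.pencil F G (starRingEnd ℂ ζ) p = 0 ∧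
      swapL H (C.emb2 p) = q := by
  have rel1 : ∀ a ∈ dU, ⟪C.As a, c2 q⟫ = ⟪C.e a, starRingEnd ℂ ζ • c1 q - F (c2 q)⟫ := by
    intro a ha
    have h := hq (mk2 a 0) ha dV.zero_mem
    have hF' := hF.isSymmetric (C.e a) (c2 q)
    simp only [ContinuousLinearMap.coe_coe] at hF'
    simp only [Core.pencil_apply_components, inner_sq, c1_mk2, c2_mk2, map_zero, neg_zero,
      sub_zero, zero_sub, smul_zero, inner_neg_left, inner_add_left,
      inner_smul_left, inner_sub_right, inner_smul_right] at h ⊢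
    linear_combination h - hF'
  have rel2 : ∀ b ∈ dV, ⟪C.As b, c1 q⟫ = ⟪C.e b, -G (c1 q) - starRingEnd ℂ ζ • c2 q⟫ := by
    intro b hb
    have h := hq (mk2 0 b) dU.zero_mem hb
    have hG' := hG.isSymmetric (C.e b) (c1 q)
    simp only [ContinuousLinearMap.coe_coe] at hG'
    simp only [Core.pencil_apply_components, inner_sq, c1_mk2, c2_mk2, map_zero,
      sub_zero, zero_sub, smul_zero, inner_neg_left, inner_sub_left,
      inner_smul_left, add_zero, inner_sub_right, inner_neg_right, inner_smul_right] at h ⊢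
    linear_combination -h - hG'
  obtain ⟨a, ha, hea, hAa⟩ := (hU.sa _ _).mpr rel1
  obtain ⟨b, hb, heb, hAb⟩ := (hV.sa _ _).mpr rel2
  refine ⟨mk2 a b, ha, hb, ?_, ?_⟩
  · rw [Core.pencil_apply_components]
    apply sq_ext <;> simp only [c1_mk2, c2_mk2, hAa, hAb, hea, heb, c1_zero, c2_zero] <;> abel
  · exact sq_ext heb hea

theorem mem_orthogonal_pencilRange_iff_of_ker_eq_span {lam : ℝ} {u : Sq Hp}
    (hu1 : c1 u ∈ dU) (hu2 : c2 u ∈ dV) (hLu : C.pencil F G lam u = 0)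
    (hker : ∀ p, c1 p ∈ dU → c2 p ∈ dV → C.pencil F G lam p = 0 → ∃ c : ℂ, p = c • u)
    (q : Sq H) :
    q ∈ (C.pencilRange dU dV F G lam)ᗮ ↔ ∃ c : ℂ, q = c • swapL H (C.emb2 u) := by
  have hconj : starRingEnd ℂ (lam : ℂ) = lam := Complex.conj_ofReal lam
  rw [Core.mem_orthogonal_pencilRange]
  constructor
  · intro hq
    obtain ⟨p, hp1, hp2, hLp, rfl⟩ := exists_eigenvector_swapL_eq_of_orthogonal hU hV hF hG hq
    obtain ⟨c, rfl⟩ := hker p hp1 hp2 (by rwa [hconj] at hLp)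
    exact ⟨c, by rw [map_smul, map_smul]⟩
  · rintro ⟨c, rfl⟩ p hp1 hp2
    rw [inner_smul_right, inner_pencil_swapL hU hV hF hG _ hp1 hp2 hu1 hu2, hconj, hLu,
      inner_zero_right, mul_zero]

end SelfAdjoint

end Pencil

theorem statement10_general
    {H 𝔥 Hp : Type*}
    [NormedAddCommGroup H] [InnerProductSpace ℂ H] [CompleteSpace H]
    [NormedAddCommGroup 𝔥] [InnerProductSpace ℂ 𝔥]
    [NormedAddCommGroup Hp] [InnerProductSpace ℂ Hp]
    (C : Core H 𝔥 Hp)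
    (dU dV : Submodule ℂ Hp) (hU : IsSAExt C dU) (hV : IsSAExt C dV)
    (F G : H →L[ℂ] H) (hF : IsSelfAdjoint F) (hG : IsSelfAdjoint G)
    (lam : ℝ) (u : Sq Hp)
    (hu1 : c1 u ∈ dU) (hu2 : c2 u ∈ dV)
    (hueq : C.Nmax u + Vop F G (C.emb2 u) = (lam : ℂ) • C.emb2 u)
    -- geometric simplicity: `dim ker(𝒩 + V - λ) = 1`
    (hker : ∀ p : Sq Hp, c1 p ∈ dU → c2 p ∈ dV →
      C.Nmax p + Vop F G (C.emb2 p) = (lam : ℂ) • C.emb2 p → ∃ c : ℂ, p = c • u)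
    -- algebraic simplicity: no generalized eigenvector
    (hgen : ¬ ∃ w : Sq Hp, c1 w ∈ dU ∧ c2 w ∈ dV ∧
      C.Nmax w + Vop F G (C.emb2 w) - (lam : ℂ) • C.emb2 w = C.emb2 u)
    -- `λ` lies in the discrete spectrum: it is isolated and `𝒩 + V - λ` has closed range
    (hClosedRange : IsClosed {x : Sq H | ∃ p : Sq Hp, c1 p ∈ dU ∧ c2 p ∈ dV ∧
      C.Nmax p + Vop F G (C.emb2 p) - (lam : ℂ) • C.emb2 p = x}) :
    ({q : Sq H | ∀ p : Sq Hp, c1 p ∈ dU → c2 p ∈ dV →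
        (inner ℂ (C.Nmax p + Vop F G (C.emb2 p) - (lam : ℂ) • C.emb2 p) q : ℂ) = 0} =
      {q : Sq H | ∃ c : ℂ, q = c • swapL H (C.emb2 u)}) ∧
    (inner ℂ (swapL H (C.emb2 u)) (C.emb2 u) : ℂ) ≠ 0 := by
  simp only [← Core.pencil_apply] at hgen hClosedRange ⊢
  have hLu : C.pencil F G lam u = 0 := by rw [Core.pencil_apply, hueq, sub_self]
  have hadj := mem_orthogonal_pencilRange_iff_of_ker_eq_span hU hV hF hG hu1 hu2 hLu
    fun p hp1 hp2 hLp => hker p hp1 hp2 (sub_eq_zero.mp hLp)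
  refine ⟨Set.ext fun q => Core.mem_orthogonal_pencilRange.symm.trans (hadj q), fun h0 => ?_⟩
  have hclosed : IsClosed (C.pencilRange dU dV F G lam : Set (Sq H)) := by
    convert hClosedRange using 1
    ext x
    exact Core.mem_pencilRange
  refine hgen (Core.mem_pencilRange.mp (mem_of_isClosed_of_forall_inner_eq_zero hclosed ?_))
  intro y hy
  obtain ⟨c, rfl⟩ := (hadj y).mp hy
  rw [inner_smul_left, h0, mul_zero]

/-- if `λ ∈ ℝ` is an algebraically simple eigenvalue in the
discrete spectrum of `𝒩 + V` with eigenvector `u`, then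
`ker((𝒩+V)* - λ) = span {τu}` and `⟨τu, u⟩ ≠ 0`. -/
theorem statement10
    {H 𝔥 Hp : Type*}
    [NormedAddCommGroup H] [InnerProductSpace ℂ H] [CompleteSpace H]
    [NormedAddCommGroup 𝔥] [InnerProductSpace ℂ 𝔥] [FiniteDimensional ℂ 𝔥]
    [NormedAddCommGroup Hp] [InnerProductSpace ℂ Hp] [CompleteSpace Hp]
    (C : Core H 𝔥 Hp)
    (dU dV : Submodule ℂ Hp) (hU : IsSAExt C dU) (hV : IsSAExt C dV)
    (F G : H →L[ℂ] H) (hF : IsSelfAdjoint F) (hG : IsSelfAdjoint G)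
    (lam : ℝ) (u : Sq Hp) (hu0 : u ≠ 0)
    (hu1 : c1 u ∈ dU) (hu2 : c2 u ∈ dV)
    (hueq : C.Nmax u + Vop F G (C.emb2 u) = (lam : ℂ) • C.emb2 u)
    -- geometric simplicity: `dim ker(𝒩 + V - λ) = 1`
    (hker : ∀ p : Sq Hp, c1 p ∈ dU → c2 p ∈ dV →
      C.Nmax p + Vop F G (C.emb2 p) = (lam : ℂ) • C.emb2 p → ∃ c : ℂ, p = c • u)
    -- algebraic simplicity: no generalized eigenvector
    (hgen : ¬ ∃ w : Sq Hp, c1 w ∈ dU ∧ c2 w ∈ dV ∧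
      C.Nmax w + Vop F G (C.emb2 w) - (lam : ℂ) • C.emb2 w = C.emb2 u)
    -- `λ` lies in the discrete spectrum: it is isolated and `𝒩 + V - λ` has closed range
    (hIso : ∃ ρ > 0, ∀ μ ∈ specSet C dU dV (Vop F G),
      ‖μ - (lam : ℂ)‖ < ρ → μ = (lam : ℂ))
    (hClosedRange : IsClosed {x : Sq H | ∃ p : Sq Hp, c1 p ∈ dU ∧ c2 p ∈ dV ∧
      C.Nmax p + Vop F G (C.emb2 p) - (lam : ℂ) • C.emb2 p = x}) :
    ({q : Sq H | ∀ p : Sq Hp, c1 p ∈ dU → c2 p ∈ dV →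
        (inner ℂ (C.Nmax p + Vop F G (C.emb2 p) - (lam : ℂ) • C.emb2 p) q : ℂ) = 0} =
      {q : Sq H | ∃ c : ℂ, q = c • swapL H (C.emb2 u)}) ∧
    (inner ℂ (swapL H (C.emb2 u)) (C.emb2 u) : ℂ) ≠ 0 :=
  statement10_general C dU dV hU hV F G hF hG lam u hu1 hu2 hueq hker hgen hClosedRange

end CSO
end
end

section
/- Fix λ₀ ∈ ℝ and t₀, and let t ↦ V_t be a family of bounded operators on H² of the form V_t(u,v) = (−G_t v, F_t u) with F_t, G_t bounded self-adjoint, differentiable at t₀ in operator norm. Let t ↦ w_t ∈ H₊² be a family defined for t near t₀, differentiable at t₀ in the graph norm of N*, such that (N* + V_t* − λ₀)τ w_t = 0 for each t. Then ⟨V̇*_{t₀} τ w_{t₀}, w_{t₀}⟩_{H²} = Ω(T w_{t₀}, T ẇ_{t₀}), where T is any trace operator satisfying Green's identity for A* and ẇ_{t₀}, V̇*_{t₀} denote the derivatives at t₀. -/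
noncomputable section

open Function Set

namespace CSO

local notation "⟪" x ", " y "⟫" => (inner ℂ x y : ℂ)

variable {H 𝔥 Hp : Type*}
  [NormedAddCommGroup H] [InnerProductSpace ℂ H]
  [NormedAddCommGroup 𝔥] [InnerProductSpace ℂ 𝔥]
  [NormedAddCommGroup Hp] [InnerProductSpace ℂ Hp]

end CSO

/-! The operator `L = (N* + V* - λ₀)τ` satisfies the Green identity
`⟨L p, q⟩ - ⟨p, L q⟩ = Ω(T p, T q)`: indeed `N*τ = diag(A*, -A*)`, while `V*τ = diag(F, -G)` and
`λ₀τ` are self-adjoint. Differentiating `L_t w_t = 0` at `t₀` gives `L_{t₀} ẇ = -V̇* τ w`, so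
with `p = w`, `q = ẇ` the identity reads `Ω(T w, T ẇ) = ⟨w, V̇* τ w⟩`. Finally `V̇* τ` is
self-adjoint, being a limit of difference quotients of the self-adjoint operators `V_t* τ`. -/

open Filter Topology

theorem HasDerivAt.isSelfAdjoint {F : Type*} [NormedAddCommGroup F] [NormedSpace ℝ F]
    [StarAddMonoid F] [StarModule ℝ F] [ContinuousStar F] {f : ℝ → F} {f' : F} {t₀ : ℝ}
    (hf : HasDerivAt f f' t₀) (hsa : ∀ᶠ t in 𝓝 t₀, IsSelfAdjoint (f t)) : IsSelfAdjoint f' :=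
  (hf.star.congr_of_eventuallyEq (hsa.mono fun _ ht => ht.symm)).unique hf

theorem HasDerivAt.clm_apply_of_isScalarTower {𝕜 : Type*} [NontriviallyNormedField 𝕜]
    {𝕜' : Type*} [NontriviallyNormedField 𝕜'] [NormedAlgebra 𝕜 𝕜']
    {E F : Type*} [NormedAddCommGroup E] [NormedSpace 𝕜' E] [NormedSpace 𝕜 E]
    [IsScalarTower 𝕜 𝕜' E] [NormedAddCommGroup F] [NormedSpace 𝕜' F] [NormedSpace 𝕜 F]
    [IsScalarTower 𝕜 𝕜' F] {c : 𝕜 → E →L[𝕜'] F} {c' : E →L[𝕜'] F} {u : 𝕜 → E} {u' : E} {x : 𝕜}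
    (hc : HasDerivAt c c' x) (hu : HasDerivAt u u' x) :
    HasDerivAt (fun y => c y (u y)) (c' (u x) + c x u') x :=
  ((ContinuousLinearMap.restrictScalarsL 𝕜' E F 𝕜 𝕜).hasFDerivAt.comp_hasDerivAt x hc).clm_apply hu

namespace CSO

local notation "⟪" x ", " y "⟫" => (inner ℂ x y : ℂ)

section Components

variable {E : Type*} [NormedAddCommGroup E] [InnerProductSpace ℂ E]

theorem inner_eq_inner_c1_add_inner_c2 (u v : Sq E) : ⟪u, v⟫ = ⟪c1 u, c1 v⟫ + ⟪c2 u, c2 v⟫ :=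
  WithLp.prod_inner_apply u v

theorem inner_swapL_left (u v : Sq E) : ⟪swapL E u, v⟫ = ⟪u, swapL E v⟫ := by
  rw [inner_eq_inner_c1_add_inner_c2, inner_eq_inner_c1_add_inner_c2, add_comm]
  rfl

end Components

section Operators

variable {H 𝔥 Hp : Type*}
  [NormedAddCommGroup H] [InnerProductSpace ℂ H]
  [NormedAddCommGroup 𝔥] [InnerProductSpace ℂ 𝔥]
  [NormedAddCommGroup Hp] [InnerProductSpace ℂ Hp]

theorem Core.emb2_swapL (C : Core H 𝔥 Hp) (p : Sq Hp) :
    C.emb2 (swapL Hp p) = swapL H (C.emb2 p) := rfl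

theorem Core.NstarOp_swapL (C : Core H 𝔥 Hp) (p : Sq Hp) :
    C.NstarOp (swapL Hp p) = C.tauNstarOp p :=
  (WithLp.equiv 2 (H × H)).injective (Prod.ext (neg_neg _) rfl)

theorem IsTrace.inner_tauNstarOp_sub {C : Core H 𝔥 Hp} {tr : Hp →L[ℂ] Sq 𝔥} (htr : IsTrace C tr)
    (p q : Sq Hp) :
    ⟪C.tauNstarOp p, C.emb2 q⟫ - ⟪C.emb2 p, C.tauNstarOp q⟫ = Om (Top tr p) (Top tr q) := by
  rw [inner_eq_inner_c1_add_inner_c2, inner_eq_inner_c1_add_inner_c2]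
  change ⟪C.As (c1 p), C.e (c1 q)⟫ + ⟪-C.As (c2 p), C.e (c2 q)⟫
      - (⟪C.e (c1 p), C.As (c1 q)⟫ + ⟪C.e (c2 p), -C.As (c2 q)⟫)
    = om (tr (c1 p)) (tr (c1 q)) - om (tr (c2 p)) (tr (c2 q))
  rw [← htr.green, ← htr.green, inner_neg_left, inner_neg_right]
  ring

theorem isSelfAdjoint_VopStar_comp_swapL [CompleteSpace H] {F G : H →L[ℂ] H}
    (hF : IsSelfAdjoint F) (hG : IsSelfAdjoint G) :
    IsSelfAdjoint ((VopStar F G).comp (swapL H)) := by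
  refine LinearMap.IsSymmetric.isSelfAdjoint fun u v => ?_
  rw [inner_eq_inner_c1_add_inner_c2, inner_eq_inner_c1_add_inner_c2]
  change ⟪F (c1 u), c1 v⟫ + ⟪-G (c2 u), c2 v⟫ = ⟪c1 u, F (c1 v)⟫ + ⟪c2 u, -G (c2 v)⟫
  rw [inner_neg_left, inner_neg_right]
  congr 1
  exacts [hF.isSymmetric _ _, congrArg Neg.neg (hG.isSymmetric _ _)]

def Core.perturbedNstarSwap (C : Core H 𝔥 Hp) (V : Sq H →L[ℂ] Sq H) (ζ : ℂ) :
    Sq Hp →L[ℂ] Sq H :=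
  (C.NstarOp + V.comp C.emb2 - ζ • C.emb2).comp (swapL Hp)

theorem Core.perturbedNstarSwap_apply (C : Core H 𝔥 Hp) (V : Sq H →L[ℂ] Sq H) (ζ : ℂ)
    (p : Sq Hp) : C.perturbedNstarSwap V ζ p =
      C.NstarOp (swapL Hp p) + V (C.emb2 (swapL Hp p)) - ζ • C.emb2 (swapL Hp p) := rfl

theorem IsTrace.inner_perturbedNstarSwap_sub [CompleteSpace H] {C : Core H 𝔥 Hp}
    {tr : Hp →L[ℂ] Sq 𝔥} (htr : IsTrace C tr) {V : Sq H →L[ℂ] Sq H}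
    (hV : IsSelfAdjoint (V.comp (swapL H))) (ζ : ℝ) (p q : Sq Hp) :
    ⟪C.perturbedNstarSwap V ζ p, C.emb2 q⟫ - ⟪C.emb2 p, C.perturbedNstarSwap V ζ q⟫ =
      Om (Top tr p) (Top tr q) := by
  have hVsymm := hV.isSymmetric (C.emb2 p) (C.emb2 q)
  simp only [ContinuousLinearMap.coe_coe, ContinuousLinearMap.comp_apply] at hVsymm
  rw [← htr.inner_tauNstarOp_sub, C.perturbedNstarSwap_apply, C.perturbedNstarSwap_apply,
    C.NstarOp_swapL, C.NstarOp_swapL, C.emb2_swapL, C.emb2_swapL]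
  simp only [inner_add_left, inner_add_right, inner_sub_left, inner_sub_right, inner_smul_left,
    inner_smul_right, hVsymm, inner_swapL_left, Complex.conj_ofReal]
  ring

theorem Core.hasDerivAt_perturbedNstarSwap [CompleteSpace H] (C : Core H 𝔥 Hp)
    {V : ℝ → Sq H →L[ℂ] Sq H} {V' : Sq H →L[ℂ] Sq H} {w : ℝ → Sq Hp} {w' : Sq Hp} {t₀ : ℝ}
    (hV : HasDerivAt V V' t₀) (hw : HasDerivAt w w' t₀) (ζ : ℂ) :
    HasDerivAt (fun t => C.perturbedNstarSwap (V t) ζ (w t))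
      (C.perturbedNstarSwap (V t₀) ζ w' + V' (C.emb2 (swapL Hp (w t₀)))) t₀ := by
  have hfixed (K : Sq Hp →L[ℂ] Sq H) : HasDerivAt (fun t => K (w t)) (K w') t₀ := by
    simpa using (hasDerivAt_const t₀ K).clm_apply_of_isScalarTower hw
  have hV_apply := hV.clm_apply_of_isScalarTower (hfixed (C.emb2.comp (swapL Hp)))
  have hsum := ((hfixed (C.NstarOp.comp (swapL Hp))).add hV_apply).sub
    ((hfixed (C.emb2.comp (swapL Hp))).const_smul ζ)
  simp only [ContinuousLinearMap.comp_apply] at hsum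
  simp only [C.perturbedNstarSwap_apply]
  exact hsum.congr_deriv (by abel)

end Operators

theorem statement13_general
    {H 𝔥 Hp : Type*}
    [NormedAddCommGroup H] [InnerProductSpace ℂ H] [CompleteSpace H]
    [NormedAddCommGroup 𝔥] [InnerProductSpace ℂ 𝔥]
    [NormedAddCommGroup Hp] [InnerProductSpace ℂ Hp]
    (C : Core H 𝔥 Hp) (tr : Hp →L[ℂ] Sq 𝔥) (htr : IsTrace C tr)
    (lam₀ t₀ : ℝ)
    (F G : ℝ → H →L[ℂ] H)
    (hF : ∀ t, IsSelfAdjoint (F t)) (hG : ∀ t, IsSelfAdjoint (G t))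
    (Vsd : Sq H →L[ℂ] Sq H)
    (hVsd : HasDerivAt (fun t => VopStar (F t) (G t)) Vsd t₀)
    (w : ℝ → Sq Hp) (wd : Sq Hp)
    (hderiv : HasDerivAt w wd t₀)
    (heq : ∃ δ > 0, ∀ t : ℝ, |t - t₀| < δ →
      C.NstarOp (swapL Hp (w t)) + VopStar (F t) (G t) (C.emb2 (swapL Hp (w t)))
        - (lam₀ : ℂ) • C.emb2 (swapL Hp (w t)) = 0) :
    (inner ℂ (Vsd (swapL H (C.emb2 (w t₀)))) (C.emb2 (w t₀)) : ℂ) =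
      Om (Top tr (w t₀)) (Top tr wd) := by
  set L := fun t => C.perturbedNstarSwap (VopStar (F t) (G t)) lam₀
  obtain ⟨δ, hδ, hker⟩ := heq
  have hker_nhds : ∀ᶠ t in 𝓝 t₀, L t (w t) = 0 :=
    mem_of_superset (Metric.ball_mem_nhds t₀ hδ) fun t ht =>
      hker t (by simpa [Real.dist_eq] using ht)
  have hL_w : L t₀ (w t₀) = 0 := hker_nhds.self_of_nhds
  have hL_wd : L t₀ wd = -Vsd (swapL H (C.emb2 (w t₀))) :=
    eq_neg_of_add_eq_zero_left <| (C.hasDerivAt_perturbedNstarSwap hVsd hderiv lam₀).unique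
      ((hasDerivAt_const t₀ 0).congr_of_eventuallyEq hker_nhds)
  have hVsd_swap : HasDerivAt (fun t => (VopStar (F t) (G t)).comp (swapL H))
      (Vsd.comp (swapL H)) t₀ := by
    simpa using (hasDerivAt_const t₀ ((ContinuousLinearMap.compL ℂ (Sq H) (Sq H) (Sq H)).flip
      (swapL H))).clm_apply_of_isScalarTower hVsd
  have hVsd_sa : IsSelfAdjoint (Vsd.comp (swapL H)) := hVsd_swap.isSelfAdjoint
    (Eventually.of_forall fun t => isSelfAdjoint_VopStar_comp_swapL (hF t) (hG t))
  calc ⟪Vsd (swapL H (C.emb2 (w t₀))), C.emb2 (w t₀)⟫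
      = ⟪C.emb2 (w t₀), Vsd (swapL H (C.emb2 (w t₀)))⟫ := hVsd_sa.isSymmetric _ _
    _ = ⟪L t₀ (w t₀), C.emb2 wd⟫ - ⟪C.emb2 (w t₀), L t₀ wd⟫ := by
      rw [hL_w, hL_wd, inner_zero_left, inner_neg_right, zero_sub, neg_neg]
    _ = Om (Top tr (w t₀)) (Top tr wd) :=
      htr.inner_perturbedNstarSwap_sub (isSelfAdjoint_VopStar_comp_swapL (hF t₀) (hG t₀)) lam₀ _ _

/-- the `t`-crossing form identity in Lemma 4.10: for a
differentiable family `t ↦ w_t ∈ ker((N* + V_t* - λ₀)τ)`, one has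
`⟨V̇*_{t₀} τ w_{t₀}, w_{t₀}⟩ = Ω(T w_{t₀}, T ẇ_{t₀})` for any trace operator `T`
satisfying Green's identity for `A*`. -/
theorem statement13
    {H 𝔥 Hp : Type*}
    [NormedAddCommGroup H] [InnerProductSpace ℂ H] [CompleteSpace H]
    [NormedAddCommGroup 𝔥] [InnerProductSpace ℂ 𝔥] [FiniteDimensional ℂ 𝔥]
    [NormedAddCommGroup Hp] [InnerProductSpace ℂ Hp] [CompleteSpace Hp]
    (C : Core H 𝔥 Hp) (tr : Hp →L[ℂ] Sq 𝔥) (htr : IsTrace C tr)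
    (lam₀ t₀ : ℝ)
    (F G : ℝ → H →L[ℂ] H)
    (hF : ∀ t, IsSelfAdjoint (F t)) (hG : ∀ t, IsSelfAdjoint (G t))
    (Vsd : Sq H →L[ℂ] Sq H)
    (hVsd : HasDerivAt (fun t => VopStar (F t) (G t)) Vsd t₀)
    (w : ℝ → Sq Hp) (wd : Sq Hp)
    (hderiv : HasDerivAt w wd t₀)
    (heq : ∃ δ > 0, ∀ t : ℝ, |t - t₀| < δ →
      C.NstarOp (swapL Hp (w t)) + VopStar (F t) (G t) (C.emb2 (swapL Hp (w t)))
        - (lam₀ : ℂ) • C.emb2 (swapL Hp (w t)) = 0) :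
    (inner ℂ (Vsd (swapL H (C.emb2 (w t₀)))) (C.emb2 (w t₀)) : ℂ) =
      Om (Top tr (w t₀)) (Top tr wd) :=
  statement13_general C tr htr lam₀ t₀ F G hF hG Vsd hVsd w wd hderiv heq

end CSO
end
end
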